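/- Assume 0 < η ≤ c_∞ and let (f^t, g^t, y^t, λ^t) be the iterates of PAME with θ ∈ (0,1) and τ := η/(2c_∞²). Then for every t ≥ 0 and every λ ∈ Δ^N, ⟨λ − λ^t, ∇_λ F(f^{t+1}, g^t, λ^t)⟩ ≤ c_∞‖c^t − b‖_1 + 7c_∞²‖λ^{t+1} − y^{t+1}‖_2/η + 5(1 − θ)c_∞²‖λ^t − λ^{t−1}‖_2/η. -/

import Mathlib

/-!
Split `⟨λ - λᵗ, ∇_λ F(fᵗ⁺¹, gᵗ, λᵗ)⟩` along `(gᵗ, λᵗ) → (gᵗ⁺¹, λᵗ) → (gᵗ⁺¹, yᵗ⁺¹)` and then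
trade `λᵗ` for `λᵗ⁺¹`. Every λ-gradient is `k ↦ ⟨πᵏ, Cᵏ⟩` for a probability plan `π`, so a change
of gradient costs at most `c_∞` times the `ℓ₁` change of `π`. The column update rescales `π` by
`b / cᵗ`, which moves it by exactly `‖cᵗ - b‖₁`. Moving `λ` by `δ` in sup norm multiplies each
Gibbs weight by a factor in `[e^{-c_∞δ/η}, e^{c_∞δ/η}]`, which moves `π` by at most `4c_∞δ/η`.
The remaining inner product at `λᵗ⁺¹` is controlled by the variational inequality of the projected
ascent step, at a cost `2‖λᵗ⁺¹ - yᵗ⁺¹‖₂ / τ`, and `yᵗ⁺¹` lies within `(1-θ)‖λᵗ - λᵗ⁻¹‖₂` of `λᵗ`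
since the projection onto the simplex is nonexpansive.
-/
open scoped BigOperators

noncomputable section

namespace EOT

/-- Square matrices as functions. -/
abbrev Mat (n : ℕ) := Fin n → Fin n → ℝ

/-- Frobenius inner product ⟨A, B⟩ = Σ_{i,j} A_{ij} B_{ij}. -/
def frob {n : ℕ} (A B : Mat n) : ℝ := ∑ i, ∑ j, A i j * B i j

/-- Row-sum vector r(A) = A 𝟙. -/
def rowSum {n : ℕ} (A : Mat n) : Fin n → ℝ := fun i => ∑ j, A i j

/-- Column-sum vector c(A) = Aᵀ 𝟙. -/
def colSum {n : ℕ} (A : Mat n) : Fin n → ℝ := fun j => ∑ i, A i j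

/-- Entrywise ℓ₁ norm of a matrix. -/
def mnorm1 {n : ℕ} (A : Mat n) : ℝ := ∑ i, ∑ j, |A i j|

/-- ℓ₁ norm of a vector. -/
def vnorm1 {m : ℕ} (v : Fin m → ℝ) : ℝ := ∑ i, |v i|

/-- Euclidean (ℓ₂) norm of a vector. -/
def vnorm2 {m : ℕ} (v : Fin m → ℝ) : ℝ := Real.sqrt (∑ i, v i ^ 2)

/-- c_∞ := max_{k,i,j} |C^k_{ij}|. -/
def cinf {n N : ℕ} (C : Fin N → Mat n) : ℝ := ⨆ k, ⨆ i, ⨆ j, |C k i j|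

/-- ι := min_j log b_j. -/
def iotaMin {n : ℕ} (b : Fin n → ℝ) : ℝ := ⨅ j, Real.log (b j)

/-- ζ^k(f,g,λ)_{ij} = exp((f_i + g_j − λ_k C^k_{ij})/η). -/
def zeta {n N : ℕ} (η : ℝ) (C : Fin N → Mat n) (f g : Fin n → ℝ)
    (lam : Fin N → ℝ) (k : Fin N) : Mat n :=
  fun i j => Real.exp ((f i + g j - lam k * C k i j) / η)

/-- π^k(f,g,λ) = ζ^k(f,g,λ) / Σ_{k'} ‖ζ^{k'}(f,g,λ)‖₁. -/
def piMat {n N : ℕ} (η : ℝ) (C : Fin N → Mat n) (f g : Fin n → ℝ)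
    (lam : Fin N → ℝ) (k : Fin N) : Mat n :=
  fun i j => zeta η C f g lam k i j / ∑ k', mnorm1 (zeta η C f g lam k')

/-- The dual objective F(f,g,λ) = ⟨f,a⟩ + ⟨g,b⟩ − η log(Σ_k ‖ζ^k‖₁) − η. -/
def Fdual {n N : ℕ} (η : ℝ) (C : Fin N → Mat n) (a b : Fin n → ℝ)
    (f g : Fin n → ℝ) (lam : Fin N → ℝ) : ℝ :=
  (∑ i, f i * a i) + (∑ j, g j * b j)
    - η * Real.log (∑ k, mnorm1 (zeta η C f g lam k)) - η

/-- Gradient of F with respect to λ: (∇_λ F)_k = ⟨π^k(f,g,λ), C^k⟩. -/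
def gradLam {n N : ℕ} (η : ℝ) (C : Fin N → Mat n) (f g : Fin n → ℝ)
    (lam : Fin N → ℝ) : Fin N → ℝ :=
  fun k => frob (piMat η C f g lam k) (C k)

/-- `p` is the Euclidean projection of `x` onto the probability simplex. -/
def IsProjSimplex {m : ℕ} (p x : Fin m → ℝ) : Prop :=
  p ∈ stdSimplex ℝ (Fin m) ∧
    ∀ q ∈ stdSimplex ℝ (Fin m),
      vnorm2 (fun k => p k - x k) ≤ vnorm2 (fun k => q k - x k)

/-- Kullback–Leibler divergence KL(v‖w) = Σ_j v_j log(v_j / w_j). -/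
def klVec {m : ℕ} (v w : Fin m → ℝ) : ℝ := ∑ j, v j * Real.log (v j / w j)

/-- The Hamiltonian E(f,g,λ¹,λ²) = F(f,g,λ¹) − (1/(2τ))‖λ¹ − λ²‖₂². -/
def ham {n N : ℕ} (η : ℝ) (C : Fin N → Mat n) (a b : Fin n → ℝ) (τ : ℝ)
    (f g : Fin n → ℝ) (l1 l2 : Fin N → ℝ) : ℝ :=
  Fdual η C a b f g l1 - 1 / (2 * τ) * vnorm2 (fun k => l1 k - l2 k) ^ 2

/-- The rounding procedure Round(A, a, b). -/
def roundMat {n : ℕ} (A : Mat n) (a b : Fin n → ℝ) : Mat n :=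
  let x : Fin n → ℝ := fun i => min (a i / rowSum A i) 1
  let A' : Mat n := fun i j => x i * A i j
  let y : Fin n → ℝ := fun j => min (b j / colSum A' j) 1
  let A'' : Mat n := fun i j => A' i j * y j
  let erra : Fin n → ℝ := fun i => a i - rowSum A'' i
  let errb : Fin n → ℝ := fun j => b j - colSum A'' j
  fun i j => A'' i j + if vnorm1 erra = 0 then 0 else erra i * errb j / vnorm1 erra

/-- The coupling decomposition set Π_{a,b}^N. -/
def coupling {n N : ℕ} (a b : Fin n → ℝ) : Set (Fin N → Mat n) :=
  {P | (∀ k i j, 0 ≤ P k i j) ∧ rowSum (∑ k, P k) = a ∧ colSum (∑ k, P k) = b}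

/-- ℓ(π, λ) = Σ_k λ_k ⟨π^k, C^k⟩. -/
def ell {n N : ℕ} (C : Fin N → Mat n) (P : Fin N → Mat n) (lam : Fin N → ℝ) : ℝ :=
  ∑ k, lam k * frob (P k) (C k)

/-- (P, λ) is an ε-optimal solution of the EOT problem (duality-gap ≤ ε). -/
def epsOptimal {n N : ℕ} (C : Fin N → Mat n) (a b : Fin n → ℝ)
    (P : Fin N → Mat n) (lam : Fin N → ℝ) (ε : ℝ) : Prop :=
  P ∈ coupling (N := N) a b ∧ lam ∈ stdSimplex ℝ (Fin N) ∧
    ∀ μ ∈ stdSimplex ℝ (Fin N), ∀ Q ∈ coupling (N := N) a b,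
      ell C P μ - ell C Q lam ≤ ε

/-- The defining properties of the Margins procedure output (a^k, b^k). -/
def MarginsProp {n N : ℕ} (P : Fin N → Mat n) (b : Fin n → ℝ)
    (ak bk : Fin N → Fin n → ℝ) : Prop :=
  (∀ k, ak k = rowSum (P k)) ∧
  (∀ k j, 0 ≤ bk k j) ∧
  (∀ j, ∑ k, bk k j = b j) ∧
  (∀ k, ∑ j, bk k j = ∑ i, ak k i) ∧
  (∀ j k k', 0 ≤ (bk k j - colSum (P k) j) * (bk k' j - colSum (P k') j))

section Vectors

variable {m : ℕ}

lemma vnorm2_eq_norm (v : Fin m → ℝ) : vnorm2 v = ‖WithLp.toLp 2 v‖ := by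
  simp [vnorm2, EuclideanSpace.norm_eq]

lemma abs_le_vnorm2 (v : Fin m → ℝ) (i : Fin m) : |v i| ≤ vnorm2 v := by
  rw [vnorm2, ← Real.sqrt_sq_eq_abs]
  exact Real.sqrt_le_sqrt (Finset.single_le_sum (fun k _ => sq_nonneg (v k)) (Finset.mem_univ i))

lemma abs_sub_le_vnorm2_add_vnorm2 (u v w : Fin m → ℝ) (k : Fin m) :
    |u k - w k| ≤ vnorm2 (fun k => u k - v k) + vnorm2 (fun k => v k - w k) :=
  (abs_sub_le _ (v k) _).trans <|
    add_le_add (abs_le_vnorm2 (fun k => u k - v k) k) (abs_le_vnorm2 (fun k => v k - w k) k)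

lemma vnorm2_const_mul {c : ℝ} (hc : 0 ≤ c) (v : Fin m → ℝ) :
    vnorm2 (fun i => c * v i) = c * vnorm2 v := by
  simp only [vnorm2, mul_pow, ← Finset.mul_sum, Real.sqrt_mul (sq_nonneg c), Real.sqrt_sq hc]

lemma sum_mul_le_of_abs_le {u : Fin m → ℝ} {M : ℝ} (hu : ∀ k, |u k| ≤ M) (v : Fin m → ℝ) :
    ∑ k, u k * v k ≤ M * ∑ k, |v k| := by
  rw [Finset.mul_sum]
  refine Finset.sum_le_sum fun k _ => (le_abs_self _).trans ?_
  rw [abs_mul]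
  exact mul_le_mul_of_nonneg_right (hu k) (abs_nonneg _)

lemma abs_sub_le_one_of_mem_stdSimplex {p q : Fin m → ℝ} (hp : p ∈ stdSimplex ℝ (Fin m))
    (hq : q ∈ stdSimplex ℝ (Fin m)) (k : Fin m) : |p k - q k| ≤ 1 := by
  obtain ⟨hp0, hp1⟩ := mem_Icc_of_mem_stdSimplex hp k
  obtain ⟨hq0, hq1⟩ := mem_Icc_of_mem_stdSimplex hq k
  exact abs_sub_le_iff.2 ⟨by linarith, by linarith⟩

lemma vnorm1_sub_le_two_of_mem_stdSimplex {p q : Fin m → ℝ} (hp : p ∈ stdSimplex ℝ (Fin m))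
    (hq : q ∈ stdSimplex ℝ (Fin m)) : vnorm1 (fun k => p k - q k) ≤ 2 := by
  calc vnorm1 (fun k => p k - q k) ≤ ∑ k, (p k + q k) :=
        Finset.sum_le_sum fun k _ => (abs_sub _ _).trans_eq <| by
          rw [abs_of_nonneg (hp.1 k), abs_of_nonneg (hq.1 k)]
    _ = 2 := by rw [Finset.sum_add_distrib, hp.2, hq.2]; norm_num

lemma const_inv_mem_stdSimplex [NeZero m] : (fun _ => (m : ℝ)⁻¹) ∈ stdSimplex ℝ (Fin m) :=
  ⟨fun _ => by positivity, by simp [NeZero.ne m]⟩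

end Vectors

namespace IsProjSimplex

variable {m : ℕ} {p x q : Fin m → ℝ}

lemma sum_mul_nonpos (h : IsProjSimplex p x) (hq : q ∈ stdSimplex ℝ (Fin m)) :
    ∑ k, (x k - p k) * (q k - p k) ≤ 0 := by
  let K : Set (EuclideanSpace ℝ (Fin m)) := WithLp.ofLp ⁻¹' stdSimplex ℝ (Fin m)
  have hK : Convex ℝ K :=
    (convex_stdSimplex ℝ (Fin m)).linear_preimage (WithLp.linearEquiv 2 ℝ (Fin m → ℝ)).toLinearMap
  have hp : WithLp.toLp 2 p ∈ K := h.1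
  have hmin : ‖WithLp.toLp 2 x - WithLp.toLp 2 p‖ = ⨅ w : K, ‖WithLp.toLp 2 x - w‖ := by
    have : Nonempty K := ⟨⟨_, hp⟩⟩
    refine le_antisymm (le_ciInf fun w => ?_) (ciInf_le ⟨0, ?_⟩ (⟨_, hp⟩ : K))
    · have := h.2 _ w.2
      rw [vnorm2_eq_norm, vnorm2_eq_norm] at this
      rw [norm_sub_rev, norm_sub_rev _ (w : EuclideanSpace ℝ (Fin m))]
      exact this
    · rintro _ ⟨w, rfl⟩
      exact norm_nonneg _
  have := (norm_eq_iInf_iff_real_inner_le_zero hK hp).1 hmin (WithLp.toLp 2 q) hq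
  simpa [PiLp.inner_apply, mul_comm] using this

lemma vnorm2_sub_le (h : IsProjSimplex p x) (hq : q ∈ stdSimplex ℝ (Fin m)) :
    vnorm2 (fun k => p k - q k) ≤ vnorm2 (fun k => x k - q k) := by
  have hsq : vnorm2 (fun k => p k - q k) ^ 2
      = ∑ k, (x k - p k) * (q k - p k) + ∑ k, (p k - q k) * (x k - q k) := by
    rw [vnorm2, Real.sq_sqrt (by positivity), ← Finset.sum_add_distrib]
    exact Finset.sum_congr rfl fun k _ => by ring
  have hcs := Real.sum_mul_le_sqrt_mul_sqrt Finset.univ (fun k => p k - q k) (fun k => x k - q k)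
  have := h.sum_mul_nonpos hq
  have h0 : 0 ≤ vnorm2 (fun k => p k - q k) := Real.sqrt_nonneg _
  have h1 : 0 ≤ vnorm2 (fun k => x k - q k) := Real.sqrt_nonneg _
  simp only [vnorm2] at *
  nlinarith

lemma vnorm2_sub_le_of_extrapolate {l l' : Fin m → ℝ} {s : ℝ} (hs : 0 ≤ s)
    (h : IsProjSimplex p (fun k => l k + s * (l k - l' k))) (hl : l ∈ stdSimplex ℝ (Fin m)) :
    vnorm2 (fun k => p k - l k) ≤ s * vnorm2 (fun k => l k - l' k) :=
  (h.vnorm2_sub_le hl).trans_eq <| by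
    rw [← vnorm2_const_mul hs]
    simp only [add_sub_cancel_left]

lemma sum_sub_mul_le {v : Fin m → ℝ} {τ : ℝ} (hτ : 0 < τ)
    (h : IsProjSimplex p (fun k => x k + τ * v k)) (hq : q ∈ stdSimplex ℝ (Fin m)) :
    ∑ k, (q k - p k) * v k ≤ 2 * vnorm2 (fun k => p k - x k) / τ := by
  have hvi : τ * ∑ k, (q k - p k) * v k - ∑ k, (p k - x k) * (q k - p k) ≤ 0 := by
    refine le_of_eq_of_le ?_ (h.sum_mul_nonpos hq)
    rw [Finset.mul_sum, ← Finset.sum_sub_distrib]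
    exact Finset.sum_congr rfl fun k _ => by ring
  have hholder := sum_mul_le_of_abs_le (abs_le_vnorm2 (fun k => p k - x k))
    (fun k => q k - p k)
  have h2 : ∑ k, |q k - p k| ≤ 2 := vnorm1_sub_le_two_of_mem_stdSimplex hq h.1
  have h0 : 0 ≤ vnorm2 (fun k => p k - x k) := Real.sqrt_nonneg _
  rw [le_div_iff₀ hτ]
  nlinarith

end IsProjSimplex

section Matrices

variable {n N : ℕ}

lemma mnorm1_of_nonneg {A : Mat n} (hA : ∀ i j, 0 ≤ A i j) : mnorm1 A = ∑ i, ∑ j, A i j :=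
  Finset.sum_congr rfl fun i _ => Finset.sum_congr rfl fun j _ => abs_of_nonneg (hA i j)

lemma mnorm1_div_const (A : Mat n) (c : ℝ) :
    mnorm1 (fun i j => A i j / c) = mnorm1 A / |c| := by
  simp only [mnorm1, abs_div, Finset.sum_div]

lemma colSum_sum_apply (P : Fin N → Mat n) (j : Fin n) :
    colSum (∑ k, P k) j = ∑ k, ∑ i, P k i j := by
  simp only [colSum, Finset.sum_apply]
  exact Finset.sum_comm

lemma sum_mnorm1_mul_right {P : Fin N → Mat n} (hP : ∀ k i j, 0 ≤ P k i j) (w : Fin n → ℝ) :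
    ∑ k, mnorm1 (fun i j => P k i j * w j) = ∑ j, colSum (∑ k, P k) j * |w j| := by
  simp only [mnorm1, colSum_sum_apply, abs_mul, abs_of_nonneg (hP _ _ _), Finset.sum_mul]
  calc ∑ k, ∑ i, ∑ j, P k i j * |w j| = ∑ k, ∑ j, ∑ i, P k i j * |w j| :=
        Finset.sum_congr rfl fun k _ => Finset.sum_comm
    _ = _ := Finset.sum_comm

lemma frob_sub_left (A B D : Mat n) : frob (A - B) D = frob A D - frob B D := by
  simp only [frob, Pi.sub_apply, sub_mul, Finset.sum_sub_distrib]

lemma abs_frob_le {A B : Mat n} {M : ℝ} (hB : ∀ i j, |B i j| ≤ M) :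
    |frob A B| ≤ M * mnorm1 A := by
  rw [mnorm1, Finset.mul_sum]
  refine (Finset.abs_sum_le_sum_abs _ _).trans (Finset.sum_le_sum fun i _ => ?_)
  rw [Finset.mul_sum]
  refine (Finset.abs_sum_le_sum_abs _ _).trans (Finset.sum_le_sum fun j _ => ?_)
  rw [abs_mul, mul_comm M]
  exact mul_le_mul_of_nonneg_left (hB i j) (abs_nonneg _)

lemma abs_le_cinf (C : Fin N → Mat n) (k : Fin N) (i j : Fin n) : |C k i j| ≤ cinf C := by
  have le_sup {ι : Type} [Finite ι] (u : ι → ℝ) (x : ι) : u x ≤ ⨆ y, u y :=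
    le_ciSup (Set.finite_range u).bddAbove x
  exact (le_sup _ j).trans <| (le_sup (fun i => ⨆ j, |C k i j|) i).trans
    (le_sup (fun k => ⨆ i, ⨆ j, |C k i j|) k)

lemma sum_abs_frob_le (P C : Fin N → Mat n) :
    ∑ k, |frob (P k) (C k)| ≤ cinf C * ∑ k, mnorm1 (P k) := by
  rw [Finset.mul_sum]
  exact Finset.sum_le_sum fun k _ => abs_frob_le (abs_le_cinf C k)

end Matrices

section Gibbs

variable {n N : ℕ} {η : ℝ} (C : Fin N → Mat n)

lemma cinf_nonneg : 0 ≤ cinf C :=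
  Real.iSup_nonneg fun _ => Real.iSup_nonneg fun _ => Real.iSup_nonneg fun _ => abs_nonneg _

lemma zeta_pos (f g : Fin n → ℝ) (lam : Fin N → ℝ) (k : Fin N) (i j : Fin n) :
    0 < zeta η C f g lam k i j :=
  Real.exp_pos _

lemma piMat_nonneg (f g : Fin n → ℝ) (lam : Fin N → ℝ) (k : Fin N) (i j : Fin n) :
    0 ≤ piMat η C f g lam k i j :=
  div_nonneg (zeta_pos C f g lam k i j).le <|
    Finset.sum_nonneg fun _ _ => Finset.sum_nonneg fun _ _ => Finset.sum_nonneg fun _ _ =>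
      abs_nonneg _

lemma colSum_sum_zeta_pos [NeZero n] [NeZero N] (f g : Fin n → ℝ) (lam : Fin N → ℝ)
    (j : Fin n) : 0 < colSum (∑ k, zeta η C f g lam k) j := by
  rw [colSum_sum_apply]
  exact Finset.sum_pos (fun k _ => Finset.sum_pos (fun i _ => zeta_pos C f g lam k i j)
    Finset.univ_nonempty) Finset.univ_nonempty

lemma sum_mnorm1_zeta_pos [NeZero n] [NeZero N] (f g : Fin n → ℝ) (lam : Fin N → ℝ) :
    0 < ∑ k, mnorm1 (zeta η C f g lam k) :=
  Finset.sum_pos (fun k _ => Finset.sum_pos (fun i _ => Finset.sum_pos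
    (fun j _ => abs_pos.2 (zeta_pos C f g lam k i j).ne') Finset.univ_nonempty)
    Finset.univ_nonempty) Finset.univ_nonempty

lemma sum_mnorm1_piMat [NeZero n] [NeZero N] (f g : Fin n → ℝ) (lam : Fin N → ℝ) :
    ∑ k, mnorm1 (piMat η C f g lam k) = 1 := by
  have hZ := sum_mnorm1_zeta_pos C f g lam (η := η)
  calc ∑ k, mnorm1 (piMat η C f g lam k)
      = ∑ k, mnorm1 (zeta η C f g lam k) / |∑ k', mnorm1 (zeta η C f g lam k')| :=
        Finset.sum_congr rfl fun k _ => mnorm1_div_const _ _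
    _ = 1 := by rw [← Finset.sum_div, abs_of_pos hZ, div_self hZ.ne']

lemma sum_abs_gradLam_le [NeZero n] [NeZero N] (f g : Fin n → ℝ) (lam : Fin N → ℝ) :
    ∑ k, |gradLam η C f g lam k| ≤ cinf C := by
  simpa only [gradLam, sum_mnorm1_piMat, mul_one] using sum_abs_frob_le (piMat η C f g lam) C

lemma sum_abs_gradLam_sub_le (f g f' g' : Fin n → ℝ) (lam lam' : Fin N → ℝ) :
    ∑ k, |gradLam η C f g lam k - gradLam η C f' g' lam' k|
      ≤ cinf C * ∑ k, mnorm1 (piMat η C f g lam k - piMat η C f' g' lam' k) := by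
  simpa only [gradLam, Pi.sub_apply, frob_sub_left] using
    sum_abs_frob_le (piMat η C f g lam - piMat η C f' g' lam') C

end Gibbs

lemma abs_sub_le_mul_add_of_exp_neg_mul_le {p q ε : ℝ} (hε : 0 ≤ ε) (hp : 0 ≤ p) (hq : 0 ≤ q)
    (hpq : Real.exp (-ε) * q ≤ p) (hqp : Real.exp (-ε) * p ≤ q) : |p - q| ≤ ε * (p + q) := by
  have h := Real.add_one_le_exp (-ε)
  rw [abs_le]
  constructor <;> nlinarith

section LambdaPerturbation

variable {n N : ℕ} {η : ℝ} (C : Fin N → Mat n) (f g : Fin n → ℝ) {lam mu : Fin N → ℝ} {δ : ℝ}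

lemma zeta_le_exp_mul_zeta (hη : 0 < η) (hδ : ∀ k, |lam k - mu k| ≤ δ) (k : Fin N) (i j : Fin n) :
    zeta η C f g lam k i j ≤ Real.exp (cinf C * δ / η) * zeta η C f g mu k i j := by
  have hC : (mu k - lam k) * C k i j ≤ cinf C * δ := by
    refine (le_abs_self _).trans ?_
    rw [abs_mul, abs_sub_comm, mul_comm (cinf C)]
    exact mul_le_mul (hδ k) (abs_le_cinf C k i j) (abs_nonneg _) ((abs_nonneg _).trans (hδ k))
  rw [zeta, zeta, ← Real.exp_add, Real.exp_le_exp, ← add_div, div_le_div_iff_of_pos_right hη]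
  linarith

lemma exp_neg_mul_piMat_le [NeZero n] [NeZero N] (hη : 0 < η) (hδ : ∀ k, |lam k - mu k| ≤ δ)
    (k : Fin N) (i j : Fin n) :
    Real.exp (-(2 * (cinf C * δ / η))) * piMat η C f g mu k i j ≤ piMat η C f g lam k i j := by
  have hδ' : ∀ k, |mu k - lam k| ≤ δ := fun k => abs_sub_comm (lam k) (mu k) ▸ hδ k
  set ε := cinf C * δ / η
  have hzeta : Real.exp (-ε) * zeta η C f g mu k i j ≤ zeta η C f g lam k i j := by
    rw [Real.exp_neg, inv_mul_le_iff₀ (Real.exp_pos _)]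
    exact zeta_le_exp_mul_zeta C f g hη hδ' k i j
  have hZ : ∑ k, mnorm1 (zeta η C f g lam k) ≤ Real.exp ε * ∑ k, mnorm1 (zeta η C f g mu k) := by
    simp only [mnorm1_of_nonneg fun i j => (zeta_pos C f g _ _ i j).le, Finset.mul_sum]
    exact Finset.sum_le_sum fun k _ => Finset.sum_le_sum fun i _ =>
      Finset.sum_le_sum fun j _ => zeta_le_exp_mul_zeta C f g hη hδ k i j
  calc Real.exp (-(2 * ε)) * piMat η C f g mu k i j
      = Real.exp (-ε) * zeta η C f g mu k i j
          / (Real.exp ε * ∑ k, mnorm1 (zeta η C f g mu k)) := by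
        rw [piMat, Real.exp_neg, Real.exp_neg, two_mul, Real.exp_add]
        field_simp
    _ ≤ piMat η C f g lam k i j :=
        div_le_div₀ (zeta_pos C f g lam k i j).le hzeta (sum_mnorm1_zeta_pos C f g lam) hZ

lemma sum_mnorm1_piMat_sub_le [NeZero n] [NeZero N] (hη : 0 < η)
    (hδ : ∀ k, |lam k - mu k| ≤ δ) :
    ∑ k, mnorm1 (piMat η C f g lam k - piMat η C f g mu k) ≤ 4 * (cinf C * δ / η) := by
  have hδ' : ∀ k, |mu k - lam k| ≤ δ := fun k => abs_sub_comm (lam k) (mu k) ▸ hδ k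
  have hε : 0 ≤ 2 * (cinf C * δ / η) := by
    have := (abs_nonneg _).trans (hδ 0)
    have := cinf_nonneg C
    positivity
  calc ∑ k, mnorm1 (piMat η C f g lam k - piMat η C f g mu k)
      ≤ ∑ k, ∑ i, ∑ j, 2 * (cinf C * δ / η) * (piMat η C f g lam k i j + piMat η C f g mu k i j) :=
        Finset.sum_le_sum fun k _ => Finset.sum_le_sum fun i _ => Finset.sum_le_sum fun j _ =>
          abs_sub_le_mul_add_of_exp_neg_mul_le hε (piMat_nonneg C f g lam k i j)
            (piMat_nonneg C f g mu k i j) (exp_neg_mul_piMat_le C f g hη hδ k i j)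
            (exp_neg_mul_piMat_le C f g hη hδ' k i j)
    _ = 2 * (cinf C * δ / η) * (∑ k, mnorm1 (piMat η C f g lam k)
          + ∑ k, mnorm1 (piMat η C f g mu k)) := by
        simp only [mnorm1_of_nonneg (piMat_nonneg C f g _ _), Finset.mul_sum, mul_add,
          Finset.sum_add_distrib]
    _ = 4 * (cinf C * δ / η) := by rw [sum_mnorm1_piMat, sum_mnorm1_piMat]; ring

lemma sum_abs_gradLam_sub_le_of_abs_sub_le [NeZero n] [NeZero N] (hη : 0 < η)
    (hδ : ∀ k, |lam k - mu k| ≤ δ) :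
    ∑ k, |gradLam η C f g lam k - gradLam η C f g mu k| ≤ 4 * cinf C ^ 2 * δ / η :=
  (sum_abs_gradLam_sub_le C f g f g lam mu).trans <|
    (mul_le_mul_of_nonneg_left (sum_mnorm1_piMat_sub_le C f g hη hδ) (cinf_nonneg C)).trans_eq
      (by ring)

end LambdaPerturbation

section ColumnStep

variable {n N : ℕ} {η : ℝ} (C : Fin N → Mat n) (f g : Fin n → ℝ) (lam : Fin N → ℝ)

lemma zeta_add_log (hη : η ≠ 0) {r : Fin n → ℝ} (hr : ∀ j, 0 < r j) (k : Fin N) (i j : Fin n) :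
    zeta η C f (fun j => g j + η * Real.log (r j)) lam k i j = zeta η C f g lam k i j * r j := by
  have hexp : (f i + (g j + η * Real.log (r j)) - lam k * C k i j) / η
      = (f i + g j - lam k * C k i j) / η + Real.log (r j) := by
    field_simp
    ring
  rw [zeta, zeta, hexp, Real.exp_add, Real.exp_log (hr j)]

lemma colSum_sum_piMat (j : Fin n) :
    colSum (∑ k, piMat η C f g lam k) j
      = colSum (∑ k, zeta η C f g lam k) j / ∑ k, mnorm1 (zeta η C f g lam k) := by
  simp only [colSum_sum_apply, piMat, Finset.sum_div]

variable {b : Fin n → ℝ}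

/-- The updated plan has column marginal `b`, so its normaliser is `∑ j, b j = 1`. -/
lemma piMat_colStep [NeZero n] [NeZero N] (hη : η ≠ 0) (hb : ∀ j, 0 < b j)
    (hb1 : ∑ j, b j = 1) (k : Fin N) (i j : Fin n) :
    piMat η C f (fun j => g j + η * Real.log (b j / colSum (∑ k, zeta η C f g lam k) j)) lam k i j
      = zeta η C f g lam k i j * (b j / colSum (∑ k, zeta η C f g lam k) j) := by
  set S := colSum (∑ k, zeta η C f g lam k)
  have hS := colSum_sum_zeta_pos C f g lam (η := η)
  have hr : ∀ j, 0 < b j / S j := fun j => div_pos (hb j) (hS j)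
  have hζ : ∀ k, zeta η C f (fun j => g j + η * Real.log (b j / S j)) lam k
      = fun i j => zeta η C f g lam k i j * (b j / S j) :=
    fun k => funext₂ fun i j => zeta_add_log C f g lam hη hr k i j
  have hZ : ∑ k, mnorm1 (zeta η C f (fun j => g j + η * Real.log (b j / S j)) lam k) = 1 := by
    simp only [hζ, sum_mnorm1_mul_right (zeta_pos C f g lam · · · |>.le)]
    rw [← hb1]
    exact Finset.sum_congr rfl fun j _ => by
      rw [abs_of_pos (hr j), mul_div_cancel₀ _ (hS j).ne']
  rw [piMat, hZ, div_one, hζ]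

lemma sum_mnorm1_piMat_sub_colStep [NeZero n] [NeZero N] (hη : η ≠ 0) (hb : ∀ j, 0 < b j)
    (hb1 : ∑ j, b j = 1) :
    ∑ k, mnorm1 (piMat η C f g lam k
        - piMat η C f (fun j => g j + η * Real.log (b j / colSum (∑ k, zeta η C f g lam k) j))
          lam k)
      = vnorm1 (fun j => colSum (∑ k, piMat η C f g lam k) j - b j) := by
  have hS := colSum_sum_zeta_pos C f g lam (η := η)
  have hZ := (sum_mnorm1_zeta_pos C f g lam (η := η)).ne'
  have hdiff : ∀ k, piMat η C f g lam k
      - piMat η C f (fun j => g j + η * Real.log (b j / colSum (∑ k, zeta η C f g lam k) j)) lam k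
      = fun i j => zeta η C f g lam k i j
          * ((colSum (∑ k, piMat η C f g lam k) j - b j) / colSum (∑ k, zeta η C f g lam k) j) := by
    intro k
    funext i j
    have := (hS j).ne'
    rw [Pi.sub_apply, Pi.sub_apply, piMat_colStep C f g lam hη hb hb1, colSum_sum_piMat, piMat]
    field_simp
  simp only [hdiff, sum_mnorm1_mul_right (zeta_pos C f g lam · · · |>.le)]
  exact Finset.sum_congr rfl fun j _ => by
    rw [abs_div, abs_of_pos (hS j), mul_div_cancel₀ _ (hS j).ne']

lemma sum_abs_gradLam_sub_colStep_le [NeZero n] [NeZero N] (hη : η ≠ 0) (hb : ∀ j, 0 < b j)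
    (hb1 : ∑ j, b j = 1) :
    ∑ k, |gradLam η C f g lam k
        - gradLam η C f (fun j => g j + η * Real.log (b j / colSum (∑ k, zeta η C f g lam k) j))
          lam k|
      ≤ cinf C * vnorm1 (fun j => colSum (∑ k, piMat η C f g lam k) j - b j) :=
  (sum_abs_gradLam_sub_le C _ _ _ _ _ _).trans_eq <| by
    rw [sum_mnorm1_piMat_sub_colStep C f g lam hη hb hb1]

end ColumnStep

lemma sum_sub_mul_le_of_mem_stdSimplex {m : ℕ} {q l l' : Fin m → ℝ} {r : ℝ}
    (hq : q ∈ stdSimplex ℝ (Fin m)) (hl : l ∈ stdSimplex ℝ (Fin m))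
    (hr : ∀ k, |l' k - l k| ≤ r) (G₀ G₁ G₂ : Fin m → ℝ) :
    ∑ k, (q k - l k) * G₀ k
      ≤ ∑ k, |G₀ k - G₁ k| + ∑ k, |G₁ k - G₂ k| + ∑ k, (q k - l' k) * G₂ k
        + r * ∑ k, |G₂ k| := by
  have h1 := abs_sub_le_one_of_mem_stdSimplex hq hl
  have hsplit : ∑ k, (q k - l k) * G₀ k
      = ∑ k, (q k - l k) * (G₀ k - G₁ k) + ∑ k, (q k - l k) * (G₁ k - G₂ k)
        + ∑ k, (q k - l' k) * G₂ k + ∑ k, (l' k - l k) * G₂ k := by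
    simp only [← Finset.sum_add_distrib]
    exact Finset.sum_congr rfl fun k _ => by ring
  rw [hsplit]
  linarith [sum_mul_le_of_abs_le h1 (fun k => G₀ k - G₁ k),
    sum_mul_le_of_abs_le h1 (fun k => G₁ k - G₂ k), sum_mul_le_of_abs_le hr G₂]

theorem pame_lambda_inner_bound_general
    {n N : ℕ} (hn : 0 < n) (hN : 0 < N)
    (C : Fin N → Mat n) (b : Fin n → ℝ)
    (hb : b ∈ stdSimplex ℝ (Fin n))
    (hb' : ∀ j, 0 < b j)
    (η : ℝ) (hη : 0 < η) (hηc : η ≤ cinf C)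
    (θ : ℝ) (hθ1 : θ < 1)
    (τ : ℝ) (hτ : τ = η / (2 * cinf C ^ 2))
    (f g : ℕ → Fin n → ℝ) (lam y : ℕ → Fin N → ℝ)
    (hlam0 : lam 0 = fun _ => (N : ℝ)⁻¹)
    (hgstep : ∀ t, g (t + 1) = fun j =>
      g t j + η * Real.log (b j / colSum (∑ k, zeta η C (f (t + 1)) (g t) (lam t) k) j))
    (hystep : ∀ t, IsProjSimplex (y (t + 1))
      (fun k => lam t k + (1 - θ) * (lam t k - lam (t - 1) k)))
    (hlamstep : ∀ t, IsProjSimplex (lam (t + 1))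
      (fun k => y (t + 1) k + τ * gradLam η C (f (t + 1)) (g (t + 1)) (y (t + 1)) k))
    (ct : ℕ → Fin n → ℝ)
    (hct : ∀ t, ct t = colSum (∑ k, piMat η C (f (t + 1)) (g t) (lam t) k)) :
    ∀ t : ℕ, ∀ lamv ∈ stdSimplex ℝ (Fin N),
      (∑ k, (lamv k - lam t k) * gradLam η C (f (t + 1)) (g t) (lam t) k)
        ≤ cinf C * vnorm1 (fun j => ct t j - b j)
          + 7 * cinf C ^ 2 * vnorm2 (fun k => lam (t + 1) k - y (t + 1) k) / η
          + 5 * (1 - θ) * cinf C ^ 2 * vnorm2 (fun k => lam t k - lam (t - 1) k) / η := by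
  intro t μ hμ
  have : NeZero n := ⟨hn.ne'⟩
  have : NeZero N := ⟨hN.ne'⟩
  have hc : 0 < cinf C := hη.trans_le hηc
  have hlam : ∀ s, lam s ∈ stdSimplex ℝ (Fin N) := by
    rintro (_ | s)
    exacts [hlam0 ▸ const_inv_mem_stdSimplex, (hlamstep s).1]
  have hy := (hystep t).vnorm2_sub_le_of_extrapolate (by linarith) (hlam t)
  set d := vnorm2 (fun k => lam t k - lam (t - 1) k)
  set e := vnorm2 (fun k => lam (t + 1) k - y (t + 1) k)
  have hr : ∀ k, |lam (t + 1) k - lam t k| ≤ e + (1 - θ) * d := fun k =>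
    (abs_sub_le_vnorm2_add_vnorm2 _ (y (t + 1)) _ k).trans (add_le_add le_rfl hy)
  have hsplit := sum_sub_mul_le_of_mem_stdSimplex hμ (hlam t) hr
    (gradLam η C (f (t + 1)) (g t) (lam t)) (gradLam η C (f (t + 1)) (g (t + 1)) (lam t))
    (gradLam η C (f (t + 1)) (g (t + 1)) (y (t + 1)))
  have hcol := sum_abs_gradLam_sub_colStep_le C (f (t + 1)) (g t) (lam t) hη.ne' hb' hb.2
  rw [← hgstep t, ← hct t] at hcol
  have hlip := sum_abs_gradLam_sub_le_of_abs_sub_le C (f (t + 1)) (g (t + 1)) hη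
    fun k => (abs_sub_comm _ _).trans_le ((abs_le_vnorm2 _ k).trans hy)
  have hproj : ∑ k, (μ k - lam (t + 1) k) * gradLam η C (f (t + 1)) (g (t + 1)) (y (t + 1)) k
      ≤ 4 * cinf C ^ 2 * e / η :=
    ((hlamstep t).sum_sub_mul_le (hτ ▸ by positivity) hμ).trans_eq (by rw [hτ]; field_simp; ring)
  have hgrad := sum_abs_gradLam_le C (f (t + 1)) (g (t + 1)) (y (t + 1)) (η := η)
  have hcη : cinf C ≤ cinf C ^ 2 / η := (le_div_iff₀ hη).2 (by nlinarith)
  have he : 0 ≤ cinf C ^ 2 * e / η :=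
    div_nonneg (mul_nonneg (sq_nonneg _) (Real.sqrt_nonneg _)) hη.le
  linear_combination hsplit + hcol + hlip + hproj + 2 * he
    + mul_le_mul_of_nonneg_left (hgrad.trans hcη) ((abs_nonneg _).trans (hr 0))

/-- bound on ⟨λ − λ^t, ∇_λ F(f^{t+1}, g^t, λ^t)⟩ along PAME. -/
theorem pame_lambda_inner_bound
    {n N : ℕ} (hn : 0 < n) (hN : 0 < N)
    (C : Fin N → Mat n) (a b : Fin n → ℝ)
    (ha : a ∈ stdSimplex ℝ (Fin n)) (hb : b ∈ stdSimplex ℝ (Fin n))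
    (ha' : ∀ i, 0 < a i) (hb' : ∀ j, 0 < b j)
    (η : ℝ) (hη : 0 < η) (hc : 0 < cinf C) (hηc : η ≤ cinf C)
    (θ : ℝ) (hθ0 : 0 < θ) (hθ1 : θ < 1)
    (τ : ℝ) (hτ : τ = η / (2 * cinf C ^ 2))
    (f g : ℕ → Fin n → ℝ) (lam y : ℕ → Fin N → ℝ)
    (hf0 : f 0 = fun _ => 1) (hg0 : g 0 = fun _ => 1)
    (hlam0 : lam 0 = fun _ => (N : ℝ)⁻¹)
    (hfstep : ∀ t, f (t + 1) = fun i =>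
      f t i + η * Real.log (a i / rowSum (∑ k, zeta η C (f t) (g t) (lam t) k) i))
    (hgstep : ∀ t, g (t + 1) = fun j =>
      g t j + η * Real.log (b j / colSum (∑ k, zeta η C (f (t + 1)) (g t) (lam t) k) j))
    (hystep : ∀ t, IsProjSimplex (y (t + 1))
      (fun k => lam t k + (1 - θ) * (lam t k - lam (t - 1) k)))
    (hlamstep : ∀ t, IsProjSimplex (lam (t + 1))
      (fun k => y (t + 1) k + τ * gradLam η C (f (t + 1)) (g (t + 1)) (y (t + 1)) k))
    (ct : ℕ → Fin n → ℝ)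
    (hct : ∀ t, ct t = colSum (∑ k, piMat η C (f (t + 1)) (g t) (lam t) k)) :
    ∀ t : ℕ, ∀ lamv ∈ stdSimplex ℝ (Fin N),
      (∑ k, (lamv k - lam t k) * gradLam η C (f (t + 1)) (g t) (lam t) k)
        ≤ cinf C * vnorm1 (fun j => ct t j - b j)
          + 7 * cinf C ^ 2 * vnorm2 (fun k => lam (t + 1) k - y (t + 1) k) / η
          + 5 * (1 - θ) * cinf C ^ 2 * vnorm2 (fun k => lam t k - lam (t - 1) k) / η :=
  pame_lambda_inner_bound_general hn hN C b hb hb' η hη hηc θ hθ1 τ hτ f g lam y hlam0 hgstep hystep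
    hlamstep ct hct

end EOT

end
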